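/- arXiv:1307.5956 — 5 statements merged into one kernel-verified Lean document; each statement's English description precedes it below -/
import Mathlib

section
/- Let F : M → N be a C-module functor mapping a C-closed subcategory M to a C-closed subcategory N'. Then the canonical morphisms [F] : [M,N] → [F(M),F(N)], defined by ev_{F(M)} ∘ ([F] * id) = F(ev_M) ∘ (F²)^{-1}, assemble into a C-enriched functor: they satisfy [F] ∘ underline(id_M) = underline(id_{F(M)}) and [F] ∘ comp_N = comp_{F(N)} ∘ ([F] ⊗ [F]). In particular [F] : [M,M] → [F(M),F(M)] is a morphism of algebras in C. -/
open CategoryTheory MonoidalCategory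

universe v₁ v₂ v₃ u₁ u₂ u₃

/-- A left module category structure of a monoidal category `C` on a category `D`. -/
structure CModule (C : Type u₁) [Category.{v₁} C] [MonoidalCategory C]
    (D : Type u₂) [Category.{v₂} D] where
  act : C ⥤ D ⥤ D
  a : ∀ (X Y : C) (m : D), (act.obj X).obj ((act.obj Y).obj m) ≅ (act.obj (X ⊗ Y)).obj m
  a_nat_left : ∀ {X X' : C} (f : X ⟶ X') (Y : C) (m : D),
    (act.map f).app ((act.obj Y).obj m) ≫ (a X' Y m).hom
      = (a X Y m).hom ≫ (act.map (f ▷ Y)).app m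
  a_nat_mid : ∀ (X : C) {Y Y' : C} (g : Y ⟶ Y') (m : D),
    (act.obj X).map ((act.map g).app m) ≫ (a X Y' m).hom
      = (a X Y m).hom ≫ (act.map (X ◁ g)).app m
  a_nat_right : ∀ (X Y : C) {m m' : D} (h : m ⟶ m'),
    (act.obj X).map ((act.obj Y).map h) ≫ (a X Y m').hom
      = (a X Y m).hom ≫ (act.obj (X ⊗ Y)).map h
  u : ∀ m : D, (act.obj (𝟙_ C)).obj m ≅ m
  u_nat : ∀ {m m' : D} (h : m ⟶ m'),
    (act.obj (𝟙_ C)).map h ≫ (u m').hom = (u m).hom ≫ h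
  pentagon : ∀ (X Y Z : C) (m : D),
    (act.obj X).map (a Y Z m).hom ≫ (a X (Y ⊗ Z) m).hom ≫ (act.map (α_ X Y Z).inv).app m
      = (a X Y ((act.obj Z).obj m)).hom ≫ (a (X ⊗ Y) Z m).hom
  triangle : ∀ (X : C) (m : D),
    (act.obj X).map (u m).hom = (a X (𝟙_ C) m).hom ≫ (act.map (ρ_ X).hom).app m

namespace CModule

variable {C : Type u₁} [Category.{v₁} C] [MonoidalCategory C]
variable {D : Type u₂} [Category.{v₂} D] {E : Type u₃} [Category.{v₃} E]

/-- `(H, ev)` is an (action) internal hom `[m, n]` for the module category `P`. -/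
def IsInternalHom (P : CModule C D) (m n : D) (H : C)
    (ev : (P.act.obj H).obj m ⟶ n) : Prop :=
  ∀ (U : C) (f : (P.act.obj U).obj m ⟶ n),
    ∃! t : U ⟶ H, (P.act.map t).app m ≫ ev = f

end CModule

/-- A `C`-module functor between module categories. -/
structure CModuleFunctor {C : Type u₁} [Category.{v₁} C] [MonoidalCategory C]
    {D : Type u₂} [Category.{v₂} D] {E : Type u₃} [Category.{v₃} E]
    (P : CModule C D) (Q : CModule C E) where
  F : D ⥤ E
  e : ∀ (X : C) (m : D), F.obj ((P.act.obj X).obj m) ≅ (Q.act.obj X).obj (F.obj m)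
  e_nat_left : ∀ {X X' : C} (f : X ⟶ X') (m : D),
    F.map ((P.act.map f).app m) ≫ (e X' m).hom
      = (e X m).hom ≫ (Q.act.map f).app (F.obj m)
  e_nat_right : ∀ (X : C) {m m' : D} (h : m ⟶ m'),
    F.map ((P.act.obj X).map h) ≫ (e X m').hom
      = (e X m).hom ≫ (Q.act.obj X).map (F.map h)
  assoc' : ∀ (X Y : C) (m : D),
    F.map (P.a X Y m).hom ≫ (e (X ⊗ Y) m).hom
      = (e X ((P.act.obj Y).obj m)).hom ≫ (Q.act.obj X).map (e Y m).hom
          ≫ (Q.a X Y (F.obj m)).hom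
  unit' : ∀ m : D, F.map (P.u m).hom = (e (𝟙_ C) m).hom ≫ (Q.u (F.obj m)).hom

/-- The `C`-module condition on a natural transformation between `C`-module functors. -/
def IsModuleNatTrans {C : Type u₁} [Category.{v₁} C] [MonoidalCategory C]
    {D : Type u₂} [Category.{v₂} D] {E : Type u₃} [Category.{v₃} E]
    {P : CModule C D} {Q : CModule C E} (Φ Ψ : CModuleFunctor P Q)
    (φ : Φ.F ⟶ Ψ.F) : Prop :=
  ∀ (X : C) (m : D),
    (Φ.e X m).hom ≫ (Q.act.obj X).map (φ.app m)
      = φ.app ((P.act.obj X).obj m) ≫ (Ψ.e X m).hom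

/-! The induced maps `[F]` are characterised by the universal property of the target internal
homs, so each identity is checked after evaluation. Evaluated on `F(m)`, a composite `t ≫ [F]`
becomes `F` applied to the evaluation of `t`, transported along `F²`; both sides of each
identity then reduce to the same morphism by the module-functor coherences of `F²` and the
naturality of the associator. -/

namespace CModule

variable {C : Type u₁} [Category.{v₁} C] [MonoidalCategory C] {D : Type u₂} [Category.{v₂} D]
  {P : CModule C D}

theorem IsInternalHom.hom_ext {m n : D} {H : C} {ev : (P.act.obj H).obj m ⟶ n}
    (h : P.IsInternalHom m n H ev) {U : C} {t t' : U ⟶ H}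
    (htt' : (P.act.map t).app m ≫ ev = (P.act.map t').app m ≫ ev) : t = t' :=
  (h U _).unique htt' rfl

theorem a_inv_nat_left {X X' : C} (f : X ⟶ X') (Y : C) (m : D) :
    (P.act.map (f ▷ Y)).app m ≫ (P.a X' Y m).inv
      = (P.a X Y m).inv ≫ (P.act.map f).app ((P.act.obj Y).obj m) := by
  rw [Iso.comp_inv_eq, Category.assoc, P.a_nat_left, Iso.inv_hom_id_assoc]

theorem a_inv_nat_mid (X : C) {Y Y' : C} (g : Y ⟶ Y') (m : D) :
    (P.act.map (X ◁ g)).app m ≫ (P.a X Y' m).inv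
      = (P.a X Y m).inv ≫ (P.act.obj X).map ((P.act.map g).app m) := by
  rw [Iso.comp_inv_eq, Category.assoc, P.a_nat_mid, Iso.inv_hom_id_assoc]

theorem act_map_tensorHom_app_comp_a_inv {X X' Y Y' : C} (f : X ⟶ X') (g : Y ⟶ Y') (m : D) :
    (P.act.map (f ⊗ₘ g)).app m ≫ (P.a X' Y' m).inv
      = (P.a X Y m).inv ≫ (P.act.map f).app ((P.act.obj Y).obj m)
          ≫ (P.act.obj X').map ((P.act.map g).app m) := by
  rw [MonoidalCategory.tensorHom_def, Functor.map_comp, NatTrans.comp_app, Category.assoc,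
    a_inv_nat_mid, reassoc_of% a_inv_nat_left]

end CModule

namespace CModuleFunctor

variable {C : Type u₁} [Category.{v₁} C] [MonoidalCategory C]
  {D : Type u₂} [Category.{v₂} D] {E : Type u₃} [Category.{v₃} E]
  {P : CModule C D} {Q : CModule C E} (Φ : CModuleFunctor P Q)

theorem e_inv_nat_left {X X' : C} (f : X ⟶ X') (m : D) :
    (Q.act.map f).app (Φ.F.obj m) ≫ (Φ.e X' m).inv
      = (Φ.e X m).inv ≫ Φ.F.map ((P.act.map f).app m) := by
  rw [Iso.comp_inv_eq, Category.assoc, Φ.e_nat_left, Iso.inv_hom_id_assoc]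

theorem e_inv_nat_right (X : C) {m m' : D} (h : m ⟶ m') :
    (Φ.e X m).inv ≫ Φ.F.map ((P.act.obj X).map h)
      = (Q.act.obj X).map (Φ.F.map h) ≫ (Φ.e X m').inv := by
  rw [Iso.inv_comp_eq, ← Category.assoc, ← Φ.e_nat_right, Category.assoc, Iso.hom_inv_id,
    Category.comp_id]

theorem e_inv_assoc (X Y : C) (m : D) :
    (Φ.e (X ⊗ Y) m).inv ≫ Φ.F.map (P.a X Y m).inv
      = (Q.a X Y (Φ.F.obj m)).inv ≫ (Q.act.obj X).map (Φ.e Y m).inv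
          ≫ (Φ.e X ((P.act.obj Y).obj m)).inv := by
  have hom_eq : Φ.F.mapIso (P.a X Y m) ≪≫ Φ.e (X ⊗ Y) m
      = Φ.e X _ ≪≫ (Q.act.obj X).mapIso (Φ.e Y m) ≪≫ Q.a X Y (Φ.F.obj m) :=
    Iso.ext (by simpa using Φ.assoc' X Y m)
  simpa using congrArg Iso.inv hom_eq

theorem act_map_comp_app_ev {m n : D} {H K : C} {ev : (P.act.obj H).obj m ⟶ n}
    {evK : (Q.act.obj K).obj (Φ.F.obj m) ⟶ Φ.F.obj n} {φ : H ⟶ K}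
    (hφ : (Q.act.map φ).app (Φ.F.obj m) ≫ evK = (Φ.e H m).inv ≫ Φ.F.map ev)
    {U : C} (t : U ⟶ H) :
    (Q.act.map (t ≫ φ)).app (Φ.F.obj m) ≫ evK
      = (Φ.e U m).inv ≫ Φ.F.map ((P.act.map t).app m ≫ ev) := by
  rw [Functor.map_comp, NatTrans.comp_app, Category.assoc, hφ, reassoc_of% e_inv_nat_left,
    Functor.map_comp]

theorem enriched_map_unit {m : D} {Hmm Kmm : C} {evmm : (P.act.obj Hmm).obj m ⟶ m}
    {evKmm : (Q.act.obj Kmm).obj (Φ.F.obj m) ⟶ Φ.F.obj m}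
    (hKmm : Q.IsInternalHom (Φ.F.obj m) (Φ.F.obj m) Kmm evKmm) {Fmm : Hmm ⟶ Kmm}
    (hFmm : (Q.act.map Fmm).app (Φ.F.obj m) ≫ evKmm = (Φ.e Hmm m).inv ≫ Φ.F.map evmm)
    {um : 𝟙_ C ⟶ Hmm} (hum : (P.act.map um).app m ≫ evmm = (P.u m).hom)
    {uFm : 𝟙_ C ⟶ Kmm} (huFm : (Q.act.map uFm).app (Φ.F.obj m) ≫ evKmm = (Q.u (Φ.F.obj m)).hom) :
    um ≫ Fmm = uFm :=
  hKmm.hom_ext (by rw [Φ.act_map_comp_app_ev hFmm, hum, Φ.unit', Iso.inv_hom_id_assoc, huFm])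

theorem enriched_map_comp {m n p : D} {Hmn Hnp Hmp Kmn Knp Kmp : C}
    {evmn : (P.act.obj Hmn).obj m ⟶ n} {evnp : (P.act.obj Hnp).obj n ⟶ p}
    {evmp : (P.act.obj Hmp).obj m ⟶ p}
    {evKmn : (Q.act.obj Kmn).obj (Φ.F.obj m) ⟶ Φ.F.obj n}
    {evKnp : (Q.act.obj Knp).obj (Φ.F.obj n) ⟶ Φ.F.obj p}
    {evKmp : (Q.act.obj Kmp).obj (Φ.F.obj m) ⟶ Φ.F.obj p}
    (hKmp : Q.IsInternalHom (Φ.F.obj m) (Φ.F.obj p) Kmp evKmp)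
    {Fmn : Hmn ⟶ Kmn}
    (hFmn : (Q.act.map Fmn).app (Φ.F.obj m) ≫ evKmn = (Φ.e Hmn m).inv ≫ Φ.F.map evmn)
    {Fnp : Hnp ⟶ Knp}
    (hFnp : (Q.act.map Fnp).app (Φ.F.obj n) ≫ evKnp = (Φ.e Hnp n).inv ≫ Φ.F.map evnp)
    {Fmp : Hmp ⟶ Kmp}
    (hFmp : (Q.act.map Fmp).app (Φ.F.obj m) ≫ evKmp = (Φ.e Hmp m).inv ≫ Φ.F.map evmp)
    {c : Hnp ⊗ Hmn ⟶ Hmp}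
    (hc : (P.act.map c).app m ≫ evmp = (P.a Hnp Hmn m).inv ≫ (P.act.obj Hnp).map evmn ≫ evnp)
    {c' : Knp ⊗ Kmn ⟶ Kmp}
    (hc' : (Q.act.map c').app (Φ.F.obj m) ≫ evKmp
      = (Q.a Knp Kmn (Φ.F.obj m)).inv ≫ (Q.act.obj Knp).map evKmn ≫ evKnp) :
    c ≫ Fmp = (Fnp ⊗ₘ Fmn) ≫ c' := by
  refine hKmp.hom_ext ?_
  calc (Q.act.map (c ≫ Fmp)).app (Φ.F.obj m) ≫ evKmp
      = (Q.a Hnp Hmn (Φ.F.obj m)).inv ≫ (Q.act.obj Hnp).map (Φ.e Hmn m).inv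
          ≫ ((Φ.e Hnp _).inv ≫ Φ.F.map ((P.act.obj Hnp).map evmn)) ≫ Φ.F.map evnp := by
        rw [Φ.act_map_comp_app_ev hFmp, hc, Functor.map_comp, Functor.map_comp,
          reassoc_of% Φ.e_inv_assoc]
        simp only [Category.assoc]
    _ = (Q.a Hnp Hmn (Φ.F.obj m)).inv
          ≫ (Q.act.obj Hnp).map ((Q.act.map Fmn).app (Φ.F.obj m) ≫ evKmn)
          ≫ (Q.act.map Fnp).app (Φ.F.obj n) ≫ evKnp := by
        rw [Φ.e_inv_nat_right, hFnp, hFmn, Functor.map_comp]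
        simp only [Category.assoc]
    _ = (Q.act.map ((Fnp ⊗ₘ Fmn) ≫ c')).app (Φ.F.obj m) ≫ evKmp := by
        rw [Q.act.map_comp, NatTrans.comp_app, Category.assoc, hc',
          reassoc_of% Q.act_map_tensorHom_app_comp_a_inv]
        simp only [Functor.map_comp, Category.assoc, NatTrans.naturality_assoc]

end CModuleFunctor

theorem moduleFunctor_enriched_functor_general
    {C : Type u₁} [Category.{v₁} C] [MonoidalCategory C]
    {D : Type u₂} [Category.{v₂} D] {E : Type u₃} [Category.{v₃} E]
    (P : CModule C D) (Q : CModule C E)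
    (Φ : CModuleFunctor P Q)
    (m n p : D)
    -- internal homs in the source module category
    (Hmn : C) (evmn : (P.act.obj Hmn).obj m ⟶ n)
    (Hnp : C) (evnp : (P.act.obj Hnp).obj n ⟶ p)
    (Hmp : C) (evmp : (P.act.obj Hmp).obj m ⟶ p)
    (Hmm : C) (evmm : (P.act.obj Hmm).obj m ⟶ m)
    -- internal homs between the images in the target module category
    (Kmn : C) (evKmn : (Q.act.obj Kmn).obj (Φ.F.obj m) ⟶ Φ.F.obj n)
    (Knp : C) (evKnp : (Q.act.obj Knp).obj (Φ.F.obj n) ⟶ Φ.F.obj p)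
    (Kmp : C) (evKmp : (Q.act.obj Kmp).obj (Φ.F.obj m) ⟶ Φ.F.obj p)
    (hKmp : Q.IsInternalHom (Φ.F.obj m) (Φ.F.obj p) Kmp evKmp)
    (Kmm : C) (evKmm : (Q.act.obj Kmm).obj (Φ.F.obj m) ⟶ Φ.F.obj m)
    (hKmm : Q.IsInternalHom (Φ.F.obj m) (Φ.F.obj m) Kmm evKmm)
    -- the morphisms `[F]`
    (Fmn : Hmn ⟶ Kmn)
    (hFmn : (Q.act.map Fmn).app (Φ.F.obj m) ≫ evKmn = (Φ.e Hmn m).inv ≫ Φ.F.map evmn)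
    (Fnp : Hnp ⟶ Knp)
    (hFnp : (Q.act.map Fnp).app (Φ.F.obj n) ≫ evKnp = (Φ.e Hnp n).inv ≫ Φ.F.map evnp)
    (Fmp : Hmp ⟶ Kmp)
    (hFmp : (Q.act.map Fmp).app (Φ.F.obj m) ≫ evKmp = (Φ.e Hmp m).inv ≫ Φ.F.map evmp)
    (Fmm : Hmm ⟶ Kmm)
    (hFmm : (Q.act.map Fmm).app (Φ.F.obj m) ≫ evKmm = (Φ.e Hmm m).inv ≫ Φ.F.map evmm)
    -- units
    (um : 𝟙_ C ⟶ Hmm) (hum : (P.act.map um).app m ≫ evmm = (P.u m).hom)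
    (uFm : 𝟙_ C ⟶ Kmm) (huFm : (Q.act.map uFm).app (Φ.F.obj m) ≫ evKmm = (Q.u (Φ.F.obj m)).hom)
    -- composition morphisms
    (c : Hnp ⊗ Hmn ⟶ Hmp)
    (hc : (P.act.map c).app m ≫ evmp
      = (P.a Hnp Hmn m).inv ≫ (P.act.obj Hnp).map evmn ≫ evnp)
    (c' : Knp ⊗ Kmn ⟶ Kmp)
    (hc' : (Q.act.map c').app (Φ.F.obj m) ≫ evKmp
      = (Q.a Knp Kmn (Φ.F.obj m)).inv ≫ (Q.act.obj Knp).map evKmn ≫ evKnp) :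
    um ≫ Fmm = uFm ∧ c ≫ Fmp = (Fnp ⊗ₘ Fmn) ≫ c' :=
  ⟨Φ.enriched_map_unit hKmm hFmm hum huFm, Φ.enriched_map_comp hKmp hFmn hFnp hFmp hc hc'⟩

/-- For a `C`-module functor `Φ : D → E`, the canonical morphisms
`[F] : [m,n] → [F(m),F(n)]` (defined via `ev ∘ ([F]*id) = F(ev) ∘ (F²)⁻¹`) assemble
into a `C`-enriched functor: they are compatible with the units and the internal
composition.  In particular `[F] : [m,m] → [F(m),F(m)]` is an algebra morphism. -/
theorem moduleFunctor_enriched_functor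
    {C : Type u₁} [Category.{v₁} C] [MonoidalCategory C]
    {D : Type u₂} [Category.{v₂} D] {E : Type u₃} [Category.{v₃} E]
    (P : CModule C D) (Q : CModule C E)
    (Φ : CModuleFunctor P Q)
    (m n p : D)
    -- internal homs in the source module category
    (Hmn : C) (evmn : (P.act.obj Hmn).obj m ⟶ n) (hmn : P.IsInternalHom m n Hmn evmn)
    (Hnp : C) (evnp : (P.act.obj Hnp).obj n ⟶ p) (hnp : P.IsInternalHom n p Hnp evnp)
    (Hmp : C) (evmp : (P.act.obj Hmp).obj m ⟶ p) (hmp : P.IsInternalHom m p Hmp evmp)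
    (Hmm : C) (evmm : (P.act.obj Hmm).obj m ⟶ m) (hmm : P.IsInternalHom m m Hmm evmm)
    -- internal homs between the images in the target module category
    (Kmn : C) (evKmn : (Q.act.obj Kmn).obj (Φ.F.obj m) ⟶ Φ.F.obj n)
    (hKmn : Q.IsInternalHom (Φ.F.obj m) (Φ.F.obj n) Kmn evKmn)
    (Knp : C) (evKnp : (Q.act.obj Knp).obj (Φ.F.obj n) ⟶ Φ.F.obj p)
    (hKnp : Q.IsInternalHom (Φ.F.obj n) (Φ.F.obj p) Knp evKnp)
    (Kmp : C) (evKmp : (Q.act.obj Kmp).obj (Φ.F.obj m) ⟶ Φ.F.obj p)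
    (hKmp : Q.IsInternalHom (Φ.F.obj m) (Φ.F.obj p) Kmp evKmp)
    (Kmm : C) (evKmm : (Q.act.obj Kmm).obj (Φ.F.obj m) ⟶ Φ.F.obj m)
    (hKmm : Q.IsInternalHom (Φ.F.obj m) (Φ.F.obj m) Kmm evKmm)
    -- the morphisms `[F]`
    (Fmn : Hmn ⟶ Kmn)
    (hFmn : (Q.act.map Fmn).app (Φ.F.obj m) ≫ evKmn = (Φ.e Hmn m).inv ≫ Φ.F.map evmn)
    (Fnp : Hnp ⟶ Knp)
    (hFnp : (Q.act.map Fnp).app (Φ.F.obj n) ≫ evKnp = (Φ.e Hnp n).inv ≫ Φ.F.map evnp)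
    (Fmp : Hmp ⟶ Kmp)
    (hFmp : (Q.act.map Fmp).app (Φ.F.obj m) ≫ evKmp = (Φ.e Hmp m).inv ≫ Φ.F.map evmp)
    (Fmm : Hmm ⟶ Kmm)
    (hFmm : (Q.act.map Fmm).app (Φ.F.obj m) ≫ evKmm = (Φ.e Hmm m).inv ≫ Φ.F.map evmm)
    -- units
    (um : 𝟙_ C ⟶ Hmm) (hum : (P.act.map um).app m ≫ evmm = (P.u m).hom)
    (uFm : 𝟙_ C ⟶ Kmm) (huFm : (Q.act.map uFm).app (Φ.F.obj m) ≫ evKmm = (Q.u (Φ.F.obj m)).hom)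
    -- composition morphisms
    (c : Hnp ⊗ Hmn ⟶ Hmp)
    (hc : (P.act.map c).app m ≫ evmp
      = (P.a Hnp Hmn m).inv ≫ (P.act.obj Hnp).map evmn ≫ evnp)
    (c' : Knp ⊗ Kmn ⟶ Kmp)
    (hc' : (Q.act.map c').app (Φ.F.obj m) ≫ evKmp
      = (Q.a Knp Kmn (Φ.F.obj m)).inv ≫ (Q.act.obj Knp).map evKmn ≫ evKnp) :
    um ≫ Fmm = uFm ∧ c ≫ Fmp = (Fnp ⊗ₘ Fmn) ≫ c' :=
  moduleFunctor_enriched_functor_general P Q Φ m n p Hmn evmn Hnp evnp Hmp evmp Hmm evmm Kmn evKmn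
    Knp evKnp Kmp evKmp hKmp Kmm evKmm hKmm Fmn hFmn Fnp hFnp Fmp hFmp Fmm hFmm um hum uFm huFm c hc
    c' hc'
end

section
/- Let C be a monoidal category, M a left C-module, and Z(C) the monoidal (Drinfeld) center of C. The alpha-induction functor α : Z(C) → End_C(M), sending (Z,z) to the C-module endofunctor Z * (−) with module structure given by the half-braiding z, lifts through the forgetful functor Z(End_C(M)) → End_C(M) to a monoidal functor Z(C) → Z(End_C(M)), with half-braiding δ_{Z,F} : α(Z)∘F → F∘α(Z) given componentwise by (F²_{Z,M})^{-1} : Z*F(M) → F(Z*M). -/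
/-!
Every property of `δ_{Z,F} = (F²_{Z,-})⁻¹` is an axiom of a module functor or of a module
natural transformation read backwards. The module structure of `α(Z)` at `X` is the action of
`z_X : Z ⊗ X ⟶ X ⊗ Z` conjugated by the associativity constraints, and a module functor
transports the action of any morphism `X ⊗ Y ⟶ X' ⊗ Y'` conjugated in this way; this gives
that `δ_{Z,F}` is a module transformation. Naturality in `F`, monoidality in `Z` and
naturality in `Z` are the module condition on `F ⟶ F'`, the associativity constraint of `F`
and the naturality of `F²` in the acting object, each inverted.
-/

open CategoryTheory MonoidalCategory

universe v₁ v₂ v₃ u₁ u₂ u₃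

namespace CModuleFunctor

variable {C : Type u₁} [Category.{v₁} C] [MonoidalCategory C]
variable {D : Type u₂} [Category.{v₂} D] {E : Type u₃} [Category.{v₃} E]
variable {P : CModule C D} {Q : CModule C E} (Φ : CModuleFunctor P Q)

theorem map_act_map_app {X X' : C} (f : X ⟶ X') (m : D) :
    Φ.F.map ((P.act.map f).app m)
      = (Φ.e X m).hom ≫ (Q.act.map f).app (Φ.F.obj m) ≫ (Φ.e X' m).inv := by
  rw [← reassoc_of% Φ.e_nat_left f m, Iso.hom_inv_id, Category.comp_id]

theorem map_a_hom (X Y : C) (m : D) :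
    Φ.F.map (P.a X Y m).hom
      = (Φ.e X ((P.act.obj Y).obj m)).hom ≫ (Q.act.obj X).map (Φ.e Y m).hom
          ≫ (Q.a X Y (Φ.F.obj m)).hom ≫ (Φ.e (X ⊗ Y) m).inv := by
  rw [← reassoc_of% Φ.assoc' X Y m, Iso.hom_inv_id, Category.comp_id]

theorem map_a_inv (X Y : C) (m : D) :
    Φ.F.map (P.a X Y m).inv
      = (Φ.e (X ⊗ Y) m).hom ≫ (Q.a X Y (Φ.F.obj m)).inv
          ≫ (Q.act.obj X).map (Φ.e Y m).inv ≫ (Φ.e X ((P.act.obj Y).obj m)).inv := by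
  rw [← cancel_epi (Φ.F.map (P.a X Y m).hom), ← Φ.F.map_comp, Iso.hom_inv_id,
    Φ.F.map_id, map_a_hom]
  simp [← Functor.map_comp_assoc]

theorem map_a_hom_act_map_a_inv {X Y X' Y' : C} (f : X ⊗ Y ⟶ X' ⊗ Y') (m : D) :
    Φ.F.map ((P.a X Y m).hom ≫ (P.act.map f).app m ≫ (P.a X' Y' m).inv)
      = (Φ.e X ((P.act.obj Y).obj m)).hom ≫ (Q.act.obj X).map (Φ.e Y m).hom
          ≫ (Q.a X Y (Φ.F.obj m)).hom ≫ (Q.act.map f).app (Φ.F.obj m)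
          ≫ (Q.a X' Y' (Φ.F.obj m)).inv ≫ (Q.act.obj X').map (Φ.e Y' m).inv
          ≫ (Φ.e X' ((P.act.obj Y').obj m)).inv := by
  simp [map_a_hom, map_act_map_app, map_a_inv]

end CModuleFunctor

theorem IsModuleNatTrans.map_app_comp_e_inv {C : Type u₁} [Category.{v₁} C]
    [MonoidalCategory C] {D : Type u₂} [Category.{v₂} D] {E : Type u₃} [Category.{v₃} E]
    {P : CModule C D} {Q : CModule C E} {Φ Ψ : CModuleFunctor P Q} {φ : Φ.F ⟶ Ψ.F}
    (hφ : IsModuleNatTrans Φ Ψ φ) (X : C) (m : D) :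
    (Q.act.obj X).map (φ.app m) ≫ (Ψ.e X m).inv
      = (Φ.e X m).inv ≫ φ.app ((P.act.obj X).obj m) := by
  rw [← cancel_epi (Φ.e X m).hom, reassoc_of% hφ X m]
  simp

/-- For a left `C`-module `D`, alpha-induction factors through the
Drinfeld center of the category of `C`-module endofunctors of `D`: for every object
`Z` of the Drinfeld center `Center C`, the family
`δ_{Z,F} := (F²_{Z,-})⁻¹ : α(Z) ∘ F → F ∘ α(Z)` is a half-braiding against `C`-module
endofunctors, i.e. each `δ_{Z,F}` is a `C`-module natural transformation, `δ` is natural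
with respect to `C`-module natural transformations, it is compatible with the monoidal
structure `α(Z ⊗ W) ≅ α(Z) ∘ α(W)` of alpha-induction, and it is natural in `Z` with
respect to morphisms of the Drinfeld center. -/
theorem alphaInduction_factors_through_center
    {C : Type u₁} [Category.{v₁} C] [MonoidalCategory C]
    {D : Type u₂} [Category.{v₂} D]
    (P : CModule C D) (Z : CategoryTheory.Center C) :
    -- (i) each `δ_{Z,F}` is a `C`-module natural transformation `α(Z)∘F → F∘α(Z)`
    (∀ (Φ : CModuleFunctor P P) (X : C) (m : D),
      (P.act.obj Z.1).map (Φ.e X m).hom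
        ≫ (P.a Z.1 X (Φ.F.obj m)).hom
        ≫ (P.act.map (Z.2.β X).hom).app (Φ.F.obj m)
        ≫ (P.a X Z.1 (Φ.F.obj m)).inv
        ≫ (P.act.obj X).map (Φ.e Z.1 m).inv
      = (Φ.e Z.1 ((P.act.obj X).obj m)).inv
        ≫ Φ.F.map ((P.a Z.1 X m).hom
            ≫ (P.act.map (Z.2.β X).hom).app m
            ≫ (P.a X Z.1 m).inv)
        ≫ (Φ.e X ((P.act.obj Z.1).obj m)).hom)
    -- (ii) naturality of `δ_{Z,-}` with respect to `C`-module natural transformations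
    ∧ (∀ (Φ Φ' : CModuleFunctor P P) (ψ : Φ.F ⟶ Φ'.F),
        IsModuleNatTrans Φ Φ' ψ → ∀ m : D,
        (P.act.obj Z.1).map (ψ.app m) ≫ (Φ'.e Z.1 m).inv
          = (Φ.e Z.1 m).inv ≫ ψ.app ((P.act.obj Z.1).obj m))
    -- (iii) compatibility with the monoidal structure of alpha-induction
    ∧ (∀ (Φ : CModuleFunctor P P) (W : CategoryTheory.Center C) (m : D),
        (P.a Z.1 W.1 (Φ.F.obj m)).hom
          ≫ (Φ.e (Z.1 ⊗ W.1) m).inv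
          ≫ Φ.F.map (P.a Z.1 W.1 m).inv
        = (P.act.obj Z.1).map (Φ.e W.1 m).inv
          ≫ (Φ.e Z.1 ((P.act.obj W.1).obj m)).inv)
    -- (iv) naturality in the center variable
    ∧ (∀ (Φ : CModuleFunctor P P) (Z' : CategoryTheory.Center C) (f : Z ⟶ Z') (m : D),
        (P.act.map f.f).app (Φ.F.obj m) ≫ (Φ.e Z'.1 m).inv
          = (Φ.e Z.1 m).inv ≫ Φ.F.map ((P.act.map f.f).app m)) := by
  refine ⟨fun Φ X m => ?_, fun Φ Φ' ψ hψ m => hψ.map_app_comp_e_inv Z.1 m,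
    fun Φ W m => ?_, fun Φ Z' f m => ?_⟩
  · simp [Φ.map_a_hom_act_map_a_inv]
  · simp [Φ.map_a_inv]
  · simp [Φ.map_act_map_app]
end

section
/- Let F : M → N be a C-module functor. Then for each Z in the Drinfeld center Z(C), the family (ζ(F)_Z)_M := F²_{Z,M} : F(Z*M) → Z*F(M) defines a C-module natural isomorphism F ∘ α_M(Z) → α_N(Z) ∘ F, natural in Z; hence the left and right Z(C)-actions on the category of C-module functors from M to N are naturally isomorphic. -/
open CategoryTheory MonoidalCategory

universe v₁ v₂ v₃ u₁ u₂ u₃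

/-! The half-braiding enters the module condition for `ζ(F)_Z` only as some morphism
`Z ⊗ X ⟶ X ⊗ Z`: since `F²` is natural in the acting object and compatible with the
associators, it intertwines any such morphism acting through the associators. Invertibility of
`ζ(F)_Z` and its naturality in `Z` are those of `F²`. -/

namespace CModuleFunctor

variable {C : Type u₁} [Category.{v₁} C] [MonoidalCategory C]
variable {D : Type u₂} [Category.{v₂} D] {E : Type u₃} [Category.{v₃} E]
variable {P : CModule C D} {Q : CModule C E}

theorem assoc_inv (Φ : CModuleFunctor P Q) (X Y : C) (m : D) :
    Φ.F.map (P.a X Y m).inv ≫ (Φ.e X ((P.act.obj Y).obj m)).hom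
        ≫ (Q.act.obj X).map (Φ.e Y m).hom
      = (Φ.e (X ⊗ Y) m).hom ≫ (Q.a X Y (Φ.F.obj m)).inv := by
  rw [← Functor.mapIso_inv, Iso.inv_comp_eq, Functor.mapIso_hom, reassoc_of% Φ.assoc',
    Iso.hom_inv_id, Category.comp_id]

theorem e_comp_map_e_naturality (Φ : CModuleFunctor P Q) {X Y X' Y' : C}
    (b : X ⊗ Y ⟶ X' ⊗ Y') (m : D) :
    Φ.F.map ((P.a X Y m).hom ≫ (P.act.map b).app m ≫ (P.a X' Y' m).inv)
        ≫ (Φ.e X' ((P.act.obj Y').obj m)).hom ≫ (Q.act.obj X').map (Φ.e Y' m).hom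
      = (Φ.e X ((P.act.obj Y).obj m)).hom ≫ (Q.act.obj X).map (Φ.e Y m).hom
        ≫ (Q.a X Y (Φ.F.obj m)).hom ≫ (Q.act.map b).app (Φ.F.obj m)
        ≫ (Q.a X' Y' (Φ.F.obj m)).inv := by
  simp only [Functor.map_comp, Category.assoc, assoc_inv]
  rw [reassoc_of% Φ.e_nat_left b m, reassoc_of% Φ.assoc']

end CModuleFunctor

/-- For a `C`-module functor `F : D → E` and each object `Z` of the
Drinfeld center, the family `(ζ(F)_Z)_m := F²_{Z,m} : F(Z*m) → Z*F(m)` is a `C`-module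
natural isomorphism `F ∘ α_D(Z) → α_E(Z) ∘ F`, natural in `Z`; hence the left and right
`Z(C)`-actions on the category of `C`-module functors `D → E` are naturally isomorphic. -/
theorem zeta_moduleNatIso
    {C : Type u₁} [Category.{v₁} C] [MonoidalCategory C]
    {D : Type u₂} [Category.{v₂} D] {E : Type u₃} [Category.{v₃} E]
    (P : CModule C D) (Q : CModule C E)
    (Φ : CModuleFunctor P Q) :
    -- `ζ(F)_Z` is a `C`-module natural transformation `F ∘ α_D(Z) → α_E(Z) ∘ F`
    (∀ (Z : CategoryTheory.Center C) (X : C) (m : D),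
      Φ.F.map ((P.a Z.1 X m).hom
          ≫ (P.act.map (Z.2.β X).hom).app m
          ≫ (P.a X Z.1 m).inv)
        ≫ (Φ.e X ((P.act.obj Z.1).obj m)).hom
        ≫ (Q.act.obj X).map (Φ.e Z.1 m).hom
      = (Φ.e Z.1 ((P.act.obj X).obj m)).hom
        ≫ (Q.act.obj Z.1).map (Φ.e X m).hom
        ≫ (Q.a Z.1 X (Φ.F.obj m)).hom
        ≫ (Q.act.map (Z.2.β X).hom).app (Φ.F.obj m)
        ≫ (Q.a X Z.1 (Φ.F.obj m)).inv)
    -- each component is an isomorphism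
    ∧ (∀ (Z : CategoryTheory.Center C) (m : D), IsIso (Φ.e Z.1 m).hom)
    -- `ζ(F)` is natural in the center variable
    ∧ (∀ (Z Z' : CategoryTheory.Center C) (f : Z ⟶ Z') (m : D),
        Φ.F.map ((P.act.map f.f).app m) ≫ (Φ.e Z'.1 m).hom
          = (Φ.e Z.1 m).hom ≫ (Q.act.map f.f).app (Φ.F.obj m)) :=
  ⟨fun Z X m => Φ.e_comp_map_e_naturality (Z.2.β X).hom m,
    fun _ _ => inferInstance,
    fun _ _ f m => Φ.e_nat_left f.f m⟩
end

section
/- Given cospans of commutative algebras A → T ← B and B → S ← C in a braided monoidal category Z (with the algebra maps into T and S landing centrally in the sense that a : A → T satisfies μ∘(id_T⊗a) = μ∘(a⊗id_T)∘c_{T,A} and dually for the maps from B and C), the fibered tensor product T⊗_B S (coequalizer of the two B-actions) carries a unique algebra structure making the coequalizer map ρ : T⊗S → T⊗_B S an algebra homomorphism, where T⊗S has the braided tensor-product algebra structure μ_{TS} = (μ_T⊗μ_S)∘(id⊗c_{S,T}⊗id). -/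
open CategoryTheory MonoidalCategory

universe v u

/-- `ρ : V ⟶ Q` is a coequalizer of the parallel pair `L, R : U ⟶ V`
(elementary formulation of the universal property). -/
def IsCoeq {Z : Type u} [Category.{v} Z] {U V Q : Z}
    (L R : U ⟶ V) (ρ : V ⟶ Q) : Prop :=
  L ≫ ρ = R ≫ ρ ∧ ∀ ⦃W : Z⦄ (h : V ⟶ W), L ≫ h = R ≫ h → ∃! k : Q ⟶ W, ρ ≫ k = h

/-!
Centrality of the legs makes `t ⊗ x ↦ t · b x` and `x ⊗ s ↦ b' x · s` monoid morphisms out of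
braided tensor products, so the two maps `L, R : (T ⊗ B) ⊗ S ⟶ T ⊗ S` being coequalized are
monoid morphisms with the common section `t ⊗ s ↦ t ⊗ 1 ⊗ s`. For such a pair, `x · L y` and
`x · R y` agree after `ρ` (and symmetrically), so the multiplication of `T ⊗ S` descends along
`ρ ⊗ ρ`. Since tensoring preserves reflexive coequalizers, `ρ`, `ρ ⊗ ρ` and `(ρ ⊗ ρ) ⊗ ρ` are
epimorphisms, which transports the monoid axioms to `Q` and forces uniqueness.
-/

open MonObj

namespace IsCoeq

variable {C : Type u} [Category.{v} C] {U V Q : C} {L R : U ⟶ V} {ρ : V ⟶ Q}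

theorem epi (hρ : IsCoeq L R ρ) : Epi ρ where
  left_cancellation g h hgh := by
    obtain ⟨k, -, hk⟩ := hρ.2 (ρ ≫ g) (by rw [← Category.assoc, hρ.1, Category.assoc])
    rw [hk g rfl, hk h hgh.symm]

theorem exists_comp_eq (hρ : IsCoeq L R ρ) {W : C} (h : V ⟶ W) (hh : L ≫ h = R ≫ h) :
    ∃ k : Q ⟶ W, ρ ≫ k = h :=
  (hρ.2 h hh).exists

end IsCoeq

section Monoidal

variable {C : Type u} [Category.{v} C] [MonoidalCategory C]

variable (C) in
def TensorPreservesReflexiveCoeq : Prop :=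
  ∀ {U V Q : C} (L R : U ⟶ V) (ρ : V ⟶ Q) (τ : V ⟶ U),
    τ ≫ L = 𝟙 V → τ ≫ R = 𝟙 V → IsCoeq L R ρ →
    ∀ X : C, IsCoeq (X ◁ L) (X ◁ R) (X ◁ ρ) ∧ IsCoeq (L ▷ X) (R ▷ X) (ρ ▷ X)

namespace TensorPreservesReflexiveCoeq

variable (hpres : TensorPreservesReflexiveCoeq C) {U V Q : C} {L R : U ⟶ V} {ρ : V ⟶ Q}
  {τ : V ⟶ U} (hτL : τ ≫ L = 𝟙 V) (hτR : τ ≫ R = 𝟙 V) (hρ : IsCoeq L R ρ)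
include hpres hτL hτR hρ

theorem isCoeq_whiskerLeft (X : C) : IsCoeq (X ◁ L) (X ◁ R) (X ◁ ρ) :=
  (hpres L R ρ τ hτL hτR hρ X).1

theorem isCoeq_whiskerRight (X : C) : IsCoeq (L ▷ X) (R ▷ X) (ρ ▷ X) :=
  (hpres L R ρ τ hτL hτR hρ X).2

theorem epi_whiskerRight_whiskerRight (X Y : C) : Epi ((ρ ▷ X) ▷ Y) :=
  (hpres.isCoeq_whiskerRight (τ := τ ▷ X)
    (by rw [← comp_whiskerRight, hτL, id_whiskerRight])
    (by rw [← comp_whiskerRight, hτR, id_whiskerRight])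
    (hpres.isCoeq_whiskerRight hτL hτR hρ X) Y).epi

theorem epi_whiskerLeft_whiskerRight (X Y : C) : Epi ((X ◁ ρ) ▷ Y) :=
  (hpres.isCoeq_whiskerRight (τ := X ◁ τ)
    (by rw [← MonoidalCategory.whiskerLeft_comp, hτL, MonoidalCategory.whiskerLeft_id])
    (by rw [← MonoidalCategory.whiskerLeft_comp, hτR, MonoidalCategory.whiskerLeft_id])
    (hpres.isCoeq_whiskerLeft hτL hτR hρ X) Y).epi

theorem epi_tensorHom : Epi (ρ ⊗ₘ ρ) := by
  have := (hpres.isCoeq_whiskerRight hτL hτR hρ V).epi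
  have := (hpres.isCoeq_whiskerLeft hτL hτR hρ Q).epi
  rw [MonoidalCategory.tensorHom_def]
  infer_instance

theorem epi_tensorHom_tensorHom : Epi ((ρ ⊗ₘ ρ) ⊗ₘ ρ) := by
  have := hpres.epi_whiskerRight_whiskerRight hτL hτR hρ V V
  have := hpres.epi_whiskerLeft_whiskerRight hτL hτR hρ Q V
  have := (hpres.isCoeq_whiskerLeft hτL hτR hρ (Q ⊗ Q)).epi
  rw [MonoidalCategory.tensorHom_def, MonoidalCategory.tensorHom_def, comp_whiskerRight]
  infer_instance

end TensorPreservesReflexiveCoeq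

theorem exists_tensorHom_comp_eq_of_isCoeq {U V Q W : C} {L R : U ⟶ V} {ρ : V ⟶ Q}
    (hr : IsCoeq (L ▷ V) (R ▷ V) (ρ ▷ V)) (hl : IsCoeq (Q ◁ L) (Q ◁ R) (Q ◁ ρ)) [Epi (ρ ▷ U)]
    (f : V ⊗ V ⟶ W) (hfr : (L ▷ V) ≫ f = (R ▷ V) ≫ f) (hfl : (V ◁ L) ≫ f = (V ◁ R) ≫ f) :
    ∃ g : Q ⊗ Q ⟶ W, (ρ ⊗ₘ ρ) ≫ g = f := by
  obtain ⟨f₁, hf₁⟩ := hr.exists_comp_eq f hfr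
  have hf₁l : (Q ◁ L) ≫ f₁ = (Q ◁ R) ≫ f₁ := by
    rw [← cancel_epi (ρ ▷ U), ← whisker_exchange_assoc, ← whisker_exchange_assoc, hf₁, hfl]
  obtain ⟨g, hg⟩ := hl.exists_comp_eq f₁ hf₁l
  exact ⟨g, by rw [MonoidalCategory.tensorHom_def, Category.assoc, hg, hf₁]⟩

section MonoidHomWithSection

variable {P M Q : C} [MonObj P] [MonObj M] {τ : M ⟶ P}

theorem whiskerRight_comp_mul_of_section (L : P ⟶ M) [IsMonHom L] (hτ : τ ≫ L = 𝟙 M) :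
    (L ▷ M) ≫ μ = (P ◁ τ) ≫ μ ≫ L := by
  rw [IsMonHom.mul_hom, tensorHom_def', Category.assoc, ← whiskerLeft_comp_assoc, hτ,
    MonoidalCategory.whiskerLeft_id, Category.id_comp]

theorem whiskerLeft_comp_mul_of_section (L : P ⟶ M) [IsMonHom L] (hτ : τ ≫ L = 𝟙 M) :
    (M ◁ L) ≫ μ = (τ ▷ P) ≫ μ ≫ L := by
  rw [IsMonHom.mul_hom, MonoidalCategory.tensorHom_def, Category.assoc, ← comp_whiskerRight_assoc,
    hτ, id_whiskerRight, Category.id_comp]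

variable {L R : P ⟶ M} [IsMonHom L] [IsMonHom R] (hτL : τ ≫ L = 𝟙 M) (hτR : τ ≫ R = 𝟙 M)
  {ρ : M ⟶ Q} (hρ : L ≫ ρ = R ≫ ρ)
include hτL hτR hρ

theorem whiskerRight_comp_mul_comp_eq : (L ▷ M) ≫ μ ≫ ρ = (R ▷ M) ≫ μ ≫ ρ := by
  rw [reassoc_of% whiskerRight_comp_mul_of_section L hτL,
    reassoc_of% whiskerRight_comp_mul_of_section R hτR, hρ]

theorem whiskerLeft_comp_mul_comp_eq : (M ◁ L) ≫ μ ≫ ρ = (M ◁ R) ≫ μ ≫ ρ := by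
  rw [reassoc_of% whiskerLeft_comp_mul_of_section L hτL,
    reassoc_of% whiskerLeft_comp_mul_of_section R hτR, hρ]

end MonoidHomWithSection

abbrev MonObj.ofEpi {M Q : C} [MonObj M] (ρ : M ⟶ Q) [Epi ρ] [Epi ((ρ ⊗ₘ ρ) ⊗ₘ ρ)]
    (mulQ : Q ⊗ Q ⟶ Q) (hmul : (ρ ⊗ₘ ρ) ≫ mulQ = μ ≫ ρ) : MonObj Q where
  one := η ≫ ρ
  mul := mulQ
  one_mul := by
    have : Epi (𝟙_ C ◁ ρ) := by rw [id_whiskerLeft]; infer_instance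
    rw [← cancel_epi (𝟙_ C ◁ ρ), whisker_exchange_assoc, comp_whiskerRight_assoc,
      ← MonoidalCategory.tensorHom_def_assoc, hmul, one_mul_assoc, leftUnitor_naturality]
  mul_one := by
    have : Epi (ρ ▷ 𝟙_ C) := by rw [whiskerRight_id]; infer_instance
    rw [← cancel_epi (ρ ▷ 𝟙_ C), ← whisker_exchange_assoc, MonoidalCategory.whiskerLeft_comp_assoc,
      ← MonoidalCategory.tensorHom_def'_assoc, hmul, mul_one_assoc, rightUnitor_naturality]
  mul_assoc := by
    have hleft : ((ρ ⊗ₘ ρ) ⊗ₘ ρ) ≫ (mulQ ▷ Q) ≫ mulQ = (μ ▷ M) ≫ μ ≫ ρ := by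
      rw [MonoidalCategory.tensorHom_def (ρ ⊗ₘ ρ) ρ, Category.assoc, whisker_exchange_assoc,
        ← comp_whiskerRight_assoc, hmul, comp_whiskerRight_assoc,
        ← MonoidalCategory.tensorHom_def_assoc, hmul]
    have hright : ((ρ ⊗ₘ ρ) ⊗ₘ ρ) ≫ (α_ Q Q Q).hom ≫ (Q ◁ mulQ) ≫ mulQ =
        (α_ M M M).hom ≫ (M ◁ μ) ≫ μ ≫ ρ := by
      rw [associator_naturality_assoc, tensorHom_def' ρ (ρ ⊗ₘ ρ), Category.assoc,
        ← whisker_exchange_assoc, ← MonoidalCategory.whiskerLeft_comp_assoc, hmul,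
        MonoidalCategory.whiskerLeft_comp_assoc, ← tensorHom_def'_assoc, hmul]
    rw [← cancel_epi ((ρ ⊗ₘ ρ) ⊗ₘ ρ), hleft, hright, MonObj.mul_assoc_assoc]

theorem isMonHom_tensorHom_comp_mul [BraidedCategory C] {A B M : C}
    [MonObj A] [MonObj B] [MonObj M] (f : A ⟶ M) (g : B ⟶ M) [IsMonHom f] [IsMonHom g]
    (hfg : (g ⊗ₘ f) ≫ μ = (β_ B A).hom ≫ (f ⊗ₘ g) ≫ μ) :
    IsMonHom ((f ⊗ₘ g) ≫ μ) where
  one_hom := by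
    rw [tensorObj.one_def, Category.assoc, tensorHom_comp_tensorHom_assoc, IsMonHom.one_hom,
      IsMonHom.one_hom, mul_one_hom, unitors_inv_equal, Iso.inv_hom_id_assoc]
  mul_hom := by
    have hfg' : (g ⊗ₘ f) ≫ (β_ M M).hom ≫ μ = (g ⊗ₘ f) ≫ μ := by
      rw [BraidedCategory.braiding_naturality_assoc, hfg]
    have key : ((f ⊗ₘ g) ⊗ₘ (f ⊗ₘ g)) ≫ tensorμ M M M M ≫ (μ ⊗ₘ μ) ≫ μ =
        ((f ⊗ₘ g) ⊗ₘ (f ⊗ₘ g)) ≫ (μ ⊗ₘ μ) ≫ μ := by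
      simp only [mon_tauto]
      rw [associator_naturality_assoc, tensorHom_comp_tensorHom_assoc,
        associator_inv_naturality_assoc, tensorHom_comp_tensorHom_assoc, hfg']
      simp only [mon_tauto]
    rw [tensorObj.mul_def, Category.assoc, tensorHom_comp_tensorHom_assoc, IsMonHom.mul_hom,
      IsMonHom.mul_hom, ← tensorHom_comp_tensorHom_assoc, ← tensorμ_natural_assoc, key,
      tensorHom_comp_tensorHom_assoc]

end Monoidal

theorem fiberedTensorProduct_algebra_general
    {Z : Type u} [Category.{v} Z] [MonoidalCategory Z] [BraidedCategory Z]
    (hpres : ∀ {U V Q : Z} (L R : U ⟶ V) (ρ : V ⟶ Q) (τ : V ⟶ U),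
      τ ≫ L = 𝟙 V → τ ≫ R = 𝟙 V → IsCoeq L R ρ →
      ∀ X : Z, IsCoeq (X ◁ L) (X ◁ R) (X ◁ ρ) ∧ IsCoeq (L ▷ X) (R ▷ X) (ρ ▷ X))
    (T S B : Mon Z)
    (b : B ⟶ T) (b' : B ⟶ S)
    -- the leg `b : B → T` lands centrally (left-center condition)
    (hbc : (b.hom ▷ T.X) ≫ T.mon.mul = (β_ B.X T.X).hom ≫ (T.X ◁ b.hom) ≫ T.mon.mul)
    -- the leg `b' : B → S` lands centrally (right-center condition)
    (hb'c : (S.X ◁ b'.hom) ≫ S.mon.mul = (β_ S.X B.X).hom ≫ (b'.hom ▷ S.X) ≫ S.mon.mul)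
    -- the fibered tensor product as a coequalizer
    (Q : Z) (ρ : T.X ⊗ S.X ⟶ Q)
    (hρ : IsCoeq
      (((T.X ◁ b.hom) ≫ T.mon.mul) ▷ S.X)
      ((α_ T.X B.X S.X).hom ≫ (T.X ◁ ((b'.hom ▷ S.X) ≫ S.mon.mul)))
      ρ) :
    ∃ (mulQ : Q ⊗ Q ⟶ Q) (oneQ : 𝟙_ Z ⟶ Q),
      -- algebra axioms
      ((mulQ ▷ Q) ≫ mulQ = (α_ Q Q Q).hom ≫ (Q ◁ mulQ) ≫ mulQ)
      ∧ ((oneQ ▷ Q) ≫ mulQ = (λ_ Q).hom)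
      ∧ ((Q ◁ oneQ) ≫ mulQ = (ρ_ Q).hom)
      -- `ρ` is an algebra homomorphism
      ∧ ((ρ ⊗ₘ ρ) ≫ mulQ = (T ⊗ S : Mon Z).mon.mul ≫ ρ)
      ∧ ((T ⊗ S : Mon Z).mon.one ≫ ρ = oneQ)
      -- uniqueness of the algebra structure with this property
      ∧ (∀ (mul' : Q ⊗ Q ⟶ Q) (one' : 𝟙_ Z ⟶ Q),
          ((mul' ▷ Q) ≫ mul' = (α_ Q Q Q).hom ≫ (Q ◁ mul') ≫ mul') →
          ((one' ▷ Q) ≫ mul' = (λ_ Q).hom) →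
          ((Q ◁ one') ≫ mul' = (ρ_ Q).hom) →
          ((ρ ⊗ₘ ρ) ≫ mul' = (T ⊗ S : Mon Z).mon.mul ≫ ρ) →
          ((T ⊗ S : Mon Z).mon.one ≫ ρ = one') →
          mul' = mulQ ∧ one' = oneQ) := by
  replace hpres : TensorPreservesReflexiveCoeq Z := @hpres
  have : IsMonHom ((T.X ◁ b.hom) ≫ μ[T.X]) := by
    simpa only [id_tensorHom] using isMonHom_tensorHom_comp_mul (𝟙 T.X) b.hom
      (by rwa [tensorHom_id, id_tensorHom])
  have : IsMonHom ((b'.hom ▷ S.X) ≫ μ[S.X]) := by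
    simpa only [tensorHom_id] using isMonHom_tensorHom_comp_mul b'.hom (𝟙 S.X)
      (by rw [tensorHom_id, id_tensorHom, hb'c])
  set τ := ((ρ_ T.X).inv ≫ (T.X ◁ η[B.X])) ▷ S.X
  have hτL : τ ≫ (((T.X ◁ b.hom) ≫ μ) ▷ S.X) = 𝟙 _ := by
    simp only [τ, ← comp_whiskerRight, Category.assoc, ← MonoidalCategory.whiskerLeft_comp_assoc,
      IsMonHom.one_hom b.hom]
    simp
  have hτR : τ ≫ (α_ T.X B.X S.X).hom ≫ (T.X ◁ ((b'.hom ▷ S.X) ≫ μ)) = 𝟙 _ := by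
    simp only [τ, comp_whiskerRight, Category.assoc, associator_naturality_middle_assoc,
      ← MonoidalCategory.whiskerLeft_comp, ← comp_whiskerRight_assoc, IsMonHom.one_hom b'.hom]
    simp
  have := hpres.epi_tensorHom hτL hτR hρ
  have := hpres.epi_tensorHom_tensorHom hτL hτR hρ
  have := hρ.epi
  have := (hpres.isCoeq_whiskerRight hτL hτR hρ ((T.X ⊗ B.X) ⊗ S.X)).epi
  obtain ⟨mulQ, hmul⟩ := exists_tensorHom_comp_eq_of_isCoeq
    (hpres.isCoeq_whiskerRight hτL hτR hρ _) (hpres.isCoeq_whiskerLeft hτL hτR hρ Q) (μ ≫ ρ)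
    (whiskerRight_comp_mul_comp_eq hτL hτR hρ.1) (whiskerLeft_comp_mul_comp_eq hτL hτR hρ.1)
  let := MonObj.ofEpi ρ mulQ hmul
  refine ⟨mulQ, η ≫ ρ, MonObj.mul_assoc Q, MonObj.one_mul Q, MonObj.mul_one Q, hmul, rfl, ?_⟩
  rintro mul' one' - - - hmul' rfl
  exact ⟨(cancel_epi (ρ ⊗ₘ ρ)).1 (hmul'.trans hmul.symm), rfl⟩

/-- Given cospans of commutative algebras `A → T ← B` and `B → S ← C`
(with centrally-landing legs), the fibered tensor product `T ⊗_B S` (the coequalizer of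
the two `B`-actions) carries a unique algebra structure making the coequalizer map
`ρ : T ⊗ S → T ⊗_B S` an algebra homomorphism, where `T ⊗ S` carries the braided
tensor-product algebra structure. -/
theorem fiberedTensorProduct_algebra
    {Z : Type u} [Category.{v} Z] [MonoidalCategory Z] [BraidedCategory Z]
    (hexist : ∀ {U V : Z} (L R : U ⟶ V) (τ : V ⟶ U),
      τ ≫ L = 𝟙 V → τ ≫ R = 𝟙 V → ∃ (Q : Z) (ρ : V ⟶ Q), IsCoeq L R ρ)
    (hpres : ∀ {U V Q : Z} (L R : U ⟶ V) (ρ : V ⟶ Q) (τ : V ⟶ U),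
      τ ≫ L = 𝟙 V → τ ≫ R = 𝟙 V → IsCoeq L R ρ →
      ∀ X : Z, IsCoeq (X ◁ L) (X ◁ R) (X ◁ ρ) ∧ IsCoeq (L ▷ X) (R ▷ X) (ρ ▷ X))
    (T S B : Mon Z)
    (hB : (β_ B.X B.X).hom ≫ B.mon.mul = B.mon.mul)  -- B is commutative
    (b : B ⟶ T) (b' : B ⟶ S)
    -- the leg `b : B → T` lands centrally (left-center condition)
    (hbc : (b.hom ▷ T.X) ≫ T.mon.mul = (β_ B.X T.X).hom ≫ (T.X ◁ b.hom) ≫ T.mon.mul)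
    -- the leg `b' : B → S` lands centrally (right-center condition)
    (hb'c : (S.X ◁ b'.hom) ≫ S.mon.mul = (β_ S.X B.X).hom ≫ (b'.hom ▷ S.X) ≫ S.mon.mul)
    -- the fibered tensor product as a coequalizer
    (Q : Z) (ρ : T.X ⊗ S.X ⟶ Q)
    (hρ : IsCoeq
      (((T.X ◁ b.hom) ≫ T.mon.mul) ▷ S.X)
      ((α_ T.X B.X S.X).hom ≫ (T.X ◁ ((b'.hom ▷ S.X) ≫ S.mon.mul)))
      ρ) :
    ∃ (mulQ : Q ⊗ Q ⟶ Q) (oneQ : 𝟙_ Z ⟶ Q),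
      -- algebra axioms
      ((mulQ ▷ Q) ≫ mulQ = (α_ Q Q Q).hom ≫ (Q ◁ mulQ) ≫ mulQ)
      ∧ ((oneQ ▷ Q) ≫ mulQ = (λ_ Q).hom)
      ∧ ((Q ◁ oneQ) ≫ mulQ = (ρ_ Q).hom)
      -- `ρ` is an algebra homomorphism
      ∧ ((ρ ⊗ₘ ρ) ≫ mulQ = (T ⊗ S : Mon Z).mon.mul ≫ ρ)
      ∧ ((T ⊗ S : Mon Z).mon.one ≫ ρ = oneQ)
      -- uniqueness of the algebra structure with this property
      ∧ (∀ (mul' : Q ⊗ Q ⟶ Q) (one' : 𝟙_ Z ⟶ Q),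
          ((mul' ▷ Q) ≫ mul' = (α_ Q Q Q).hom ≫ (Q ◁ mul') ≫ mul') →
          ((one' ▷ Q) ≫ mul' = (λ_ Q).hom) →
          ((Q ◁ one') ≫ mul' = (ρ_ Q).hom) →
          ((ρ ⊗ₘ ρ) ≫ mul' = (T ⊗ S : Mon Z).mon.mul ≫ ρ) →
          ((T ⊗ S : Mon Z).mon.one ≫ ρ = one') →
          mul' = mulQ ∧ one' = oneQ) :=
  fiberedTensorProduct_algebra_general hpres T S B b b' hbc hb'c Q ρ hρ
end

section
/- With notation as in the composition of cospans, the composed cospan A → T⊗_B S ← C, with legs α = ρ∘(a⊗ι_S) and γ = ρ∘(ι_T⊗c), is again a cospan between commutative algebras: α and γ are algebra homomorphisms and satisfy the left/right centrality conditions μ∘(id⊗α) = μ∘(α⊗id)∘c and μ∘(γ⊗id) = μ∘(id⊗γ)∘c in T⊗_B S. -/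
/-!
Both legs factor through `ρ` via the monoid morphisms `a ≫ inl : A ⟶ T ⊗ S` and
`c ≫ inr : C ⟶ T ⊗ S`, and `ρ` is multiplicative and unital, so the legs are algebra maps.
In `T ⊗ S`, multiplying by an element of `T ⊗ 1` only acts on the `T` factor, so centrality of
`a` in `T` gives centrality of `a ≫ inl` in `T ⊗ S`, and dually for `c`. Centrality then descends
along `ρ` because `ρ ▷ A` and `C ◁ ρ` are epi: the pair coequalized by `ρ` is reflexive (its common
section comes from the unit of `B`), so whiskering preserves the coequalizer.
-/

open CategoryTheory MonoidalCategory

universe v u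

theorem IsCoeq.epi_s13 {Z : Type u} [Category.{v} Z] {U V Q : Z} {L R : U ⟶ V} {ρ : V ⟶ Q}
    (h : IsCoeq L R ρ) : Epi ρ := by
  refine ⟨fun {W} k k' hk => ?_⟩
  obtain ⟨m, -, hm⟩ := h.2 (ρ ≫ k') (by rw [← Category.assoc, h.1, Category.assoc])
  exact (hm k hk).trans (hm k' rfl).symm

section Monoidal

variable {Z : Type u} [Category.{v} Z] [MonoidalCategory Z]

theorem isReflexivePair_relativeTensor {T B S : Mon Z} (b : B ⟶ T) (b' : B ⟶ S) :
    IsReflexivePair (((T.X ◁ b.hom) ≫ T.mon.mul) ▷ S.X)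
      ((α_ T.X B.X S.X).hom ≫ (T.X ◁ ((b'.hom ▷ S.X) ≫ S.mon.mul))) := by
  refine IsReflexivePair.mk' (((ρ_ T.X).inv ≫ T.X ◁ B.mon.one) ▷ S.X) ?_ ?_
  · rw [← comp_whiskerRight, Category.assoc, ← whiskerLeft_comp_assoc, IsMonHom.one_hom,
      MonObj.mul_one, Iso.inv_hom_id, id_whiskerRight]
  · rw [comp_whiskerRight, Category.assoc, associator_naturality_middle_assoc,
      ← MonoidalCategory.whiskerLeft_comp, ← comp_whiskerRight_assoc, IsMonHom.one_hom,
      MonObj.one_mul]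
    monoidal

variable [BraidedCategory Z]

namespace CategoryTheory.Mon

def inl (T S : Mon Z) : T ⟶ T ⊗ S := (ρ_ T).inv ≫ (T ◁ (default : Mon.trivial Z ⟶ S))

def inr (T S : Mon Z) : S ⟶ T ⊗ S := (λ_ S).inv ≫ ((default : Mon.trivial Z ⟶ T) ▷ S)

@[simp]
lemma inl_hom (T S : Mon Z) : (inl T S).hom = (ρ_ T.X).inv ≫ T.X ◁ S.mon.one := rfl

@[simp]
lemma inr_hom (T S : Mon Z) : (inr T S).hom = (λ_ S.X).inv ≫ T.mon.one ▷ S.X := rfl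

lemma whiskerLeft_inl_mul (T S : Mon Z) :
    ((T.X ⊗ S.X) ◁ (inl T S).hom) ≫ (T ⊗ S).mon.mul
      = (α_ T.X S.X T.X).hom ≫ T.X ◁ (β_ S.X T.X).hom ≫ (α_ T.X T.X S.X).inv ≫
          T.mon.mul ▷ S.X := by
  calc _ = ((T.X ⊗ S.X) ◁ (ρ_ T.X).inv) ≫ tensorμ T.X S.X T.X (𝟙_ Z) ≫
          (T.mon.mul ⊗ₘ (S.X ◁ S.mon.one ≫ S.mon.mul)) := by
        rw [inl_hom, tensor_mul, whiskerLeft_comp_assoc, ← id_tensorHom T.X S.mon.one,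
          tensorμ_natural_right_assoc, tensorHom_comp_tensorHom, MonoidalCategory.whiskerLeft_id,
          Category.id_comp]
    _ = _ := by
      rw [MonObj.mul_one, MonoidalCategory.tensorHom_def']
      simp only [tensorμ]
      monoidal

lemma inl_whiskerRight_mul (T S : Mon Z) :
    ((inl T S).hom ▷ (T.X ⊗ S.X)) ≫ (T ⊗ S).mon.mul = (α_ T.X T.X S.X).inv ≫ T.mon.mul ▷ S.X := by
  calc _ = ((ρ_ T.X).inv ▷ (T.X ⊗ S.X)) ≫ tensorμ T.X (𝟙_ Z) T.X S.X ≫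
          (T.mon.mul ⊗ₘ (S.mon.one ▷ S.X ≫ S.mon.mul)) := by
        rw [inl_hom, tensor_mul, comp_whiskerRight_assoc, ← id_tensorHom T.X S.mon.one,
          tensorμ_natural_left_assoc, tensorHom_comp_tensorHom, id_whiskerRight, Category.id_comp]
    _ = _ := by
      rw [MonObj.one_mul, MonoidalCategory.tensorHom_def]
      simp only [tensorμ, braiding_tensorUnit_left]
      monoidal

lemma whiskerLeft_inr_mul (T S : Mon Z) :
    ((T.X ⊗ S.X) ◁ (inr T S).hom) ≫ (T ⊗ S).mon.mul = (α_ T.X S.X S.X).hom ≫ T.X ◁ S.mon.mul := by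
  calc _ = ((T.X ⊗ S.X) ◁ (λ_ S.X).inv) ≫ tensorμ T.X S.X (𝟙_ Z) S.X ≫
          ((T.X ◁ T.mon.one ≫ T.mon.mul) ⊗ₘ S.mon.mul) := by
        rw [inr_hom, tensor_mul, whiskerLeft_comp_assoc, ← tensorHom_id T.mon.one S.X,
          tensorμ_natural_right_assoc, tensorHom_comp_tensorHom, MonoidalCategory.whiskerLeft_id,
          Category.id_comp]
    _ = _ := by
      rw [MonObj.mul_one, MonoidalCategory.tensorHom_def]
      simp only [tensorμ, braiding_tensorUnit_right]
      monoidal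

lemma inr_whiskerRight_mul (T S : Mon Z) :
    ((inr T S).hom ▷ (T.X ⊗ S.X)) ≫ (T ⊗ S).mon.mul
      = (α_ S.X T.X S.X).inv ≫ (β_ S.X T.X).hom ▷ S.X ≫ (α_ T.X S.X S.X).hom ≫
          T.X ◁ S.mon.mul := by
  calc _ = ((λ_ S.X).inv ▷ (T.X ⊗ S.X)) ≫ tensorμ (𝟙_ Z) S.X T.X S.X ≫
          ((T.mon.one ▷ T.X ≫ T.mon.mul) ⊗ₘ S.mon.mul) := by
        rw [inr_hom, tensor_mul, comp_whiskerRight_assoc, ← tensorHom_id T.mon.one S.X,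
          tensorμ_natural_left_assoc, tensorHom_comp_tensorHom, id_whiskerRight, Category.id_comp]
    _ = _ := by
      rw [MonObj.one_mul, MonoidalCategory.tensorHom_def']
      simp only [tensorμ]
      monoidal

end CategoryTheory.Mon

open Mon

def IsLeftCentral {M X : Z} (mul : M ⊗ M ⟶ M) (f : X ⟶ M) : Prop :=
  (M ◁ f) ≫ mul = (β_ M X).hom ≫ (f ▷ M) ≫ mul

def IsRightCentral {M X : Z} (mul : M ⊗ M ⟶ M) (f : X ⟶ M) : Prop :=
  (f ▷ M) ≫ mul = (β_ X M).hom ≫ (M ◁ f) ≫ mul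

lemma IsLeftCentral.comp_of_epi {M Q X : Z} {mulM : M ⊗ M ⟶ M} {mulQ : Q ⊗ Q ⟶ Q}
    {f : X ⟶ M} (hf : IsLeftCentral mulM f) {ρ : M ⟶ Q} (hρ : (ρ ⊗ₘ ρ) ≫ mulQ = mulM ≫ ρ)
    [Epi (ρ ▷ X)] : IsLeftCentral mulQ (f ≫ ρ) := by
  unfold IsLeftCentral at *
  rw [← cancel_epi (ρ ▷ X)]
  calc (ρ ▷ X) ≫ (Q ◁ (f ≫ ρ)) ≫ mulQ = (M ◁ f) ≫ (ρ ⊗ₘ ρ) ≫ mulQ := by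
        rw [whiskerLeft_comp_assoc, ← whisker_exchange_assoc, ← tensorHom_def_assoc]
    _ = (β_ M X).hom ≫ (f ▷ M) ≫ (ρ ⊗ₘ ρ) ≫ mulQ := by
        rw [hρ, reassoc_of% hf]
    _ = (ρ ▷ X) ≫ (β_ Q X).hom ≫ ((f ≫ ρ) ▷ Q) ≫ mulQ := by
        rw [BraidedCategory.braiding_naturality_left_assoc, comp_whiskerRight_assoc,
          whisker_exchange_assoc, ← tensorHom_def'_assoc]

lemma IsRightCentral.comp_of_epi {M Q X : Z} {mulM : M ⊗ M ⟶ M} {mulQ : Q ⊗ Q ⟶ Q}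
    {f : X ⟶ M} (hf : IsRightCentral mulM f) {ρ : M ⟶ Q} (hρ : (ρ ⊗ₘ ρ) ≫ mulQ = mulM ≫ ρ)
    [Epi (X ◁ ρ)] : IsRightCentral mulQ (f ≫ ρ) := by
  unfold IsRightCentral at *
  rw [← cancel_epi (X ◁ ρ)]
  calc (X ◁ ρ) ≫ ((f ≫ ρ) ▷ Q) ≫ mulQ = (f ▷ M) ≫ (ρ ⊗ₘ ρ) ≫ mulQ := by
        rw [comp_whiskerRight_assoc, whisker_exchange_assoc, ← tensorHom_def'_assoc]
    _ = (β_ X M).hom ≫ (M ◁ f) ≫ (ρ ⊗ₘ ρ) ≫ mulQ := by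
        rw [hρ, reassoc_of% hf]
    _ = (X ◁ ρ) ≫ (β_ X Q).hom ≫ (Q ◁ (f ≫ ρ)) ≫ mulQ := by
        rw [BraidedCategory.braiding_naturality_right_assoc, whiskerLeft_comp_assoc,
          ← whisker_exchange_assoc, ← tensorHom_def_assoc]

lemma IsLeftCentral.comp_inl {T : Mon Z} (S : Mon Z) {X : Z} {u : X ⟶ T.X}
    (hu : IsLeftCentral T.mon.mul u) : IsLeftCentral (T ⊗ S).mon.mul (u ≫ (inl T S).hom) := by
  unfold IsLeftCentral at *
  dsimp only [monMonoidalStruct_tensorObj_X]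
  calc _ = (α_ T.X S.X X).hom ≫ T.X ◁ (β_ S.X X).hom ≫ (α_ T.X X S.X).inv ≫
          ((T.X ◁ u ≫ T.mon.mul) ▷ S.X) := by
        rw [whiskerLeft_comp_assoc, whiskerLeft_inl_mul, associator_naturality_right_assoc,
          ← whiskerLeft_comp_assoc, BraidedCategory.braiding_naturality_right,
          whiskerLeft_comp_assoc, associator_inv_naturality_middle_assoc, comp_whiskerRight]
    _ = _ := by
        rw [hu, comp_whiskerRight_assoc, inl_whiskerRight_mul,
          BraidedCategory.braiding_tensor_left_hom]
        simp

lemma IsRightCentral.comp_inr (T : Mon Z) {S : Mon Z} {X : Z} {v : X ⟶ S.X}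
    (hv : IsRightCentral S.mon.mul v) : IsRightCentral (T ⊗ S).mon.mul (v ≫ (inr T S).hom) := by
  unfold IsRightCentral at *
  dsimp only [monMonoidalStruct_tensorObj_X]
  calc _ = (α_ X T.X S.X).inv ≫ (β_ X T.X).hom ▷ S.X ≫ (α_ T.X X S.X).hom ≫
          T.X ◁ (v ▷ S.X ≫ S.mon.mul) := by
        rw [comp_whiskerRight_assoc, inr_whiskerRight_mul, associator_inv_naturality_left_assoc,
          ← comp_whiskerRight_assoc, BraidedCategory.braiding_naturality_left,
          comp_whiskerRight_assoc, associator_naturality_middle_assoc, whiskerLeft_comp]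
    _ = _ := by
        rw [hv, whiskerLeft_comp_assoc, whiskerLeft_inr_mul,
          BraidedCategory.braiding_tensor_right_hom]
        simp

end Monoidal

theorem composedCospan_is_cospan_general
    {Z : Type u} [Category.{v} Z] [MonoidalCategory Z] [BraidedCategory Z]
    (hpres : ∀ {U V Q : Z} (L R : U ⟶ V) (ρ : V ⟶ Q) (τ : V ⟶ U),
      τ ≫ L = 𝟙 V → τ ≫ R = 𝟙 V → IsCoeq L R ρ →
      ∀ X : Z, IsCoeq (X ◁ L) (X ◁ R) (X ◁ ρ) ∧ IsCoeq (L ▷ X) (R ▷ X) (ρ ▷ X))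
    (A T B S Cc : Mon Z)
    -- the cospan `A → T ← B`
    (a : A ⟶ T) (b : B ⟶ T)
    (hac : (T.X ◁ a.hom) ≫ T.mon.mul = (β_ T.X A.X).hom ≫ (a.hom ▷ T.X) ≫ T.mon.mul)
    -- the cospan `B → S ← C`
    (b' : B ⟶ S) (c : Cc ⟶ S)
    (hcc : (c.hom ▷ S.X) ≫ S.mon.mul = (β_ Cc.X S.X).hom ≫ (S.X ◁ c.hom) ≫ S.mon.mul)
    -- the fibered tensor product with its induced algebra structure
    (Q : Z) (ρ : T.X ⊗ S.X ⟶ Q)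
    (hρ : IsCoeq
      (((T.X ◁ b.hom) ≫ T.mon.mul) ▷ S.X)
      ((α_ T.X B.X S.X).hom ≫ (T.X ◁ ((b'.hom ▷ S.X) ≫ S.mon.mul)))
      ρ)
    (mulQ : Q ⊗ Q ⟶ Q) (oneQ : 𝟙_ Z ⟶ Q)
    (hρmul : (ρ ⊗ₘ ρ) ≫ mulQ = (T ⊗ S : Mon Z).mon.mul ≫ ρ)
    (hρone : (T ⊗ S : Mon Z).mon.one ≫ ρ = oneQ) :
    -- the two legs of the composed cospan
    (((a.hom ≫ (ρ_ T.X).inv ≫ (T.X ◁ S.mon.one) ≫ ρ)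
        ⊗ₘ (a.hom ≫ (ρ_ T.X).inv ≫ (T.X ◁ S.mon.one) ≫ ρ)) ≫ mulQ
      = A.mon.mul ≫ (a.hom ≫ (ρ_ T.X).inv ≫ (T.X ◁ S.mon.one) ≫ ρ))
    ∧ (A.mon.one ≫ (a.hom ≫ (ρ_ T.X).inv ≫ (T.X ◁ S.mon.one) ≫ ρ) = oneQ)
    ∧ (((c.hom ≫ (λ_ S.X).inv ≫ (T.mon.one ▷ S.X) ≫ ρ)
        ⊗ₘ (c.hom ≫ (λ_ S.X).inv ≫ (T.mon.one ▷ S.X) ≫ ρ)) ≫ mulQ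
      = Cc.mon.mul ≫ (c.hom ≫ (λ_ S.X).inv ≫ (T.mon.one ▷ S.X) ≫ ρ))
    ∧ (Cc.mon.one ≫ (c.hom ≫ (λ_ S.X).inv ≫ (T.mon.one ▷ S.X) ≫ ρ) = oneQ)
    -- the centrality conditions for the legs
    ∧ ((Q ◁ (a.hom ≫ (ρ_ T.X).inv ≫ (T.X ◁ S.mon.one) ≫ ρ)) ≫ mulQ
      = (β_ Q A.X).hom ≫ ((a.hom ≫ (ρ_ T.X).inv ≫ (T.X ◁ S.mon.one) ≫ ρ) ▷ Q) ≫ mulQ)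
    ∧ (((c.hom ≫ (λ_ S.X).inv ≫ (T.mon.one ▷ S.X) ≫ ρ) ▷ Q) ≫ mulQ
      = (β_ Cc.X Q).hom ≫ (Q ◁ (c.hom ≫ (λ_ S.X).inv ≫ (T.mon.one ▷ S.X) ≫ ρ)) ≫ mulQ) := by
  have : IsReflexivePair _ _ := isReflexivePair_relativeTensor b b'
  have hcoeq := hpres _ _ ρ _ (section_comp_left _ _) (section_comp_right _ _) hρ
  have : Epi (ρ ▷ A.X) := (hcoeq A.X).2.epi_s13
  have : Epi (Cc.X ◁ ρ) := (hcoeq Cc.X).1.epi_s13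
  have hα : a.hom ≫ (ρ_ T.X).inv ≫ (T.X ◁ S.mon.one) ≫ ρ = (a ≫ Mon.inl T S).hom ≫ ρ := by
    simp
  have hγ : c.hom ≫ (λ_ S.X).inv ≫ (T.mon.one ▷ S.X) ≫ ρ = (c ≫ Mon.inr T S).hom ≫ ρ := by
    simp
  rw [hα, hγ]
  refine ⟨?_, ?_, ?_, ?_, (IsLeftCentral.comp_inl S hac).comp_of_epi hρmul,
    (IsRightCentral.comp_inr T hcc).comp_of_epi hρmul⟩
  · rw [← tensorHom_comp_tensorHom, Category.assoc, hρmul, IsMonHom.mul_hom_assoc]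
  · rw [IsMonHom.one_hom_assoc, hρone]
  · rw [← tensorHom_comp_tensorHom, Category.assoc, hρmul, IsMonHom.mul_hom_assoc]
  · rw [IsMonHom.one_hom_assoc, hρone]

/-- The composite of two cospans of commutative algebras is again a
cospan: the legs `α = ρ ∘ (a ⊗ ι_S)` and `γ = ρ ∘ (ι_T ⊗ c)` into the fibered tensor
product `T ⊗_B S` are algebra homomorphisms satisfying the centrality conditions. -/
theorem composedCospan_is_cospan
    {Z : Type u} [Category.{v} Z] [MonoidalCategory Z] [BraidedCategory Z]
    (hexist : ∀ {U V : Z} (L R : U ⟶ V) (τ : V ⟶ U),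
      τ ≫ L = 𝟙 V → τ ≫ R = 𝟙 V → ∃ (Q : Z) (ρ : V ⟶ Q), IsCoeq L R ρ)
    (hpres : ∀ {U V Q : Z} (L R : U ⟶ V) (ρ : V ⟶ Q) (τ : V ⟶ U),
      τ ≫ L = 𝟙 V → τ ≫ R = 𝟙 V → IsCoeq L R ρ →
      ∀ X : Z, IsCoeq (X ◁ L) (X ◁ R) (X ◁ ρ) ∧ IsCoeq (L ▷ X) (R ▷ X) (ρ ▷ X))
    (A T B S Cc : Mon Z)
    (hA : (β_ A.X A.X).hom ≫ A.mon.mul = A.mon.mul)      -- A is commutative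
    (hB : (β_ B.X B.X).hom ≫ B.mon.mul = B.mon.mul)      -- B is commutative
    (hC : (β_ Cc.X Cc.X).hom ≫ Cc.mon.mul = Cc.mon.mul)  -- C is commutative
    -- the cospan `A → T ← B`
    (a : A ⟶ T) (b : B ⟶ T)
    (hac : (T.X ◁ a.hom) ≫ T.mon.mul = (β_ T.X A.X).hom ≫ (a.hom ▷ T.X) ≫ T.mon.mul)
    (hbc : (b.hom ▷ T.X) ≫ T.mon.mul = (β_ B.X T.X).hom ≫ (T.X ◁ b.hom) ≫ T.mon.mul)
    -- the cospan `B → S ← C`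
    (b' : B ⟶ S) (c : Cc ⟶ S)
    (hb'c : (S.X ◁ b'.hom) ≫ S.mon.mul = (β_ S.X B.X).hom ≫ (b'.hom ▷ S.X) ≫ S.mon.mul)
    (hcc : (c.hom ▷ S.X) ≫ S.mon.mul = (β_ Cc.X S.X).hom ≫ (S.X ◁ c.hom) ≫ S.mon.mul)
    -- the fibered tensor product with its induced algebra structure
    (Q : Z) (ρ : T.X ⊗ S.X ⟶ Q)
    (hρ : IsCoeq
      (((T.X ◁ b.hom) ≫ T.mon.mul) ▷ S.X)
      ((α_ T.X B.X S.X).hom ≫ (T.X ◁ ((b'.hom ▷ S.X) ≫ S.mon.mul)))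
      ρ)
    (mulQ : Q ⊗ Q ⟶ Q) (oneQ : 𝟙_ Z ⟶ Q)
    (hassoc : (mulQ ▷ Q) ≫ mulQ = (α_ Q Q Q).hom ≫ (Q ◁ mulQ) ≫ mulQ)
    (honemul : (oneQ ▷ Q) ≫ mulQ = (λ_ Q).hom)
    (hmulone : (Q ◁ oneQ) ≫ mulQ = (ρ_ Q).hom)
    (hρmul : (ρ ⊗ₘ ρ) ≫ mulQ = (T ⊗ S : Mon Z).mon.mul ≫ ρ)
    (hρone : (T ⊗ S : Mon Z).mon.one ≫ ρ = oneQ) :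
    -- the two legs of the composed cospan
    (((a.hom ≫ (ρ_ T.X).inv ≫ (T.X ◁ S.mon.one) ≫ ρ)
        ⊗ₘ (a.hom ≫ (ρ_ T.X).inv ≫ (T.X ◁ S.mon.one) ≫ ρ)) ≫ mulQ
      = A.mon.mul ≫ (a.hom ≫ (ρ_ T.X).inv ≫ (T.X ◁ S.mon.one) ≫ ρ))
    ∧ (A.mon.one ≫ (a.hom ≫ (ρ_ T.X).inv ≫ (T.X ◁ S.mon.one) ≫ ρ) = oneQ)
    ∧ (((c.hom ≫ (λ_ S.X).inv ≫ (T.mon.one ▷ S.X) ≫ ρ)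
        ⊗ₘ (c.hom ≫ (λ_ S.X).inv ≫ (T.mon.one ▷ S.X) ≫ ρ)) ≫ mulQ
      = Cc.mon.mul ≫ (c.hom ≫ (λ_ S.X).inv ≫ (T.mon.one ▷ S.X) ≫ ρ))
    ∧ (Cc.mon.one ≫ (c.hom ≫ (λ_ S.X).inv ≫ (T.mon.one ▷ S.X) ≫ ρ) = oneQ)
    -- the centrality conditions for the legs
    ∧ ((Q ◁ (a.hom ≫ (ρ_ T.X).inv ≫ (T.X ◁ S.mon.one) ≫ ρ)) ≫ mulQ
      = (β_ Q A.X).hom ≫ ((a.hom ≫ (ρ_ T.X).inv ≫ (T.X ◁ S.mon.one) ≫ ρ) ▷ Q) ≫ mulQ)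
    ∧ (((c.hom ≫ (λ_ S.X).inv ≫ (T.mon.one ▷ S.X) ≫ ρ) ▷ Q) ≫ mulQ
      = (β_ Cc.X Q).hom ≫ (Q ◁ (c.hom ≫ (λ_ S.X).inv ≫ (T.mon.one ▷ S.X) ≫ ρ)) ≫ mulQ) :=
  composedCospan_is_cospan_general hpres A T B S Cc a b hac b' c hcc Q ρ hρ mulQ oneQ hρmul hρone
end
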